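/- For every n ≥ 6, the covering product of the simplex T_n = conv{e_1, …, e_n, −𝟏} in ℝ^n satisfies μ_1(T_n) · μ_2(T_n) · … · μ_n(T_n) · vol(T_n) ≤ (n+1) / (16/15)^{7n/15}. -/

import Mathlib

/-
An affine subspace `L` of dimension `n - i` meets a coordinate subspace spanned by
at most `i` of the `e_j`, say `j ∈ J`. For a point `x` of that intersection and a shift
`θ ≥ 0`, subtracting the lattice point with coordinates `⌊x_j + θ⌋` (`j ∈ J`) leaves a vector
of `μ • T_n` as soon as `∑_{j ∈ J} fract (x_j + θ) + (n + 1 - |J|) θ ≤ μ`, by the barycentric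
description of `T_n`. Averaging over `θ ∈ {0, 1/m, …, (m-1)/m}` gives
`μ_i(T_n) ≤ (n+1)/2 + (i - (n+1)/2)/m`, hence `μ_i(T_n) ≤ min(i, (n+1)/2)`.
Moreover `T_n` is the image of the corner simplex `{x ≥ 0, ∑ x ≤ 1}` under
`x ↦ x + (∑ x) 𝟏 - 𝟏`, of determinant `n + 1`, so `vol T_n = (n+1)/n!`. What is left is
`∏ min(i, (n+1)/2) · (16/15)^n ≤ n!`: each of the about `n/4` factors with `i ≥ 3(n+1)/4` is at
most `(2/3) i`.
-/

open MeasureTheory Pointwise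

/-- The integer lattice `ℤⁿ` viewed as a subset of `ℝⁿ`. -/
def intLattice (n : ℕ) : Set (EuclideanSpace ℝ (Fin n)) :=
  {x | ∀ j, ∃ m : ℤ, x j = (m : ℝ)}

/-- The `i`-th covering minimum `μ_i(K, ℤⁿ)` of a convex body `K ⊆ ℝⁿ`:
the least `μ > 0` such that `μK + ℤⁿ` meets every `(n-i)`-dimensional affine subspace. -/
noncomputable def covMin (n i : ℕ) (K : Set (EuclideanSpace ℝ (Fin n))) : ℝ :=
  sInf {μ : ℝ | 0 < μ ∧ ∀ L : AffineSubspace ℝ (EuclideanSpace ℝ (Fin n)),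
    (L : Set (EuclideanSpace ℝ (Fin n))).Nonempty →
    Module.finrank ℝ L.direction = n - i →
    ((μ • K + intLattice n) ∩ (L : Set (EuclideanSpace ℝ (Fin n)))).Nonempty}

/-- The simplex `T_n = conv{e_1, …, e_n, -𝟏}`, where `𝟏 = (1, …, 1)`. -/
noncomputable def Tsimplex (n : ℕ) : Set (EuclideanSpace ℝ (Fin n)) :=
  convexHull ℝ ((Set.range fun j : Fin n => EuclideanSpace.single j (1 : ℝ)) ∪
    {(WithLp.toLp 2 (fun _ : Fin n => (-1 : ℝ)) : EuclideanSpace ℝ (Fin n))})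

open Finset Module

lemma sum_range_natCast_div {m : ℕ} (hm : m ≠ 0) : ∑ t ∈ range m, (t : ℝ) / m = (m - 1) / 2 := by
  have : (((∑ t ∈ range m, t) * 2 : ℕ) : ℝ) = ((m * (m - 1) : ℕ) : ℝ) := by
    rw [sum_range_id_mul_two]
  push_cast [Nat.cast_sub (Nat.one_le_iff_ne_zero.2 hm)] at this
  rw [← sum_div, div_eq_div_iff (by positivity) two_ne_zero]
  linear_combination this

lemma sum_fract_add_div_le (y : ℝ) {m : ℕ} (hm : m ≠ 0) :
    ∑ t ∈ range m, Int.fract (y + t / m) ≤ (m + 1) / 2 := by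
  have hm0 : (0 : ℝ) < m := by positivity
  set u := Int.fract y
  -- `r` counts the `t < m` for which `y + t / m` reaches the next integer after `⌊y⌋`.
  set r := ⌊m * u⌋₊
  have hr : (r : ℝ) ≤ m * u := Nat.floor_le (by positivity)
  have hr' : m * u < r + 1 := Nat.lt_floor_add_one _
  have hrm : r ≤ m := by
    have : m * u < m := by nlinarith [Int.fract_lt_one y]
    exact_mod_cast (hr.trans this.le)
  have hpt : ∀ t ∈ range m, Int.fract (y + t / m) ≤ u + t / m - if m ≤ t + r then 1 else 0 := by
    intro t _
    have hfloor : ((⌊y⌋ + if m ≤ t + r then 1 else 0 : ℤ) : ℝ) ≤ ⌊y + t / m⌋ := by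
      refine Int.cast_le.2 (Int.le_floor.2 ?_)
      push_cast
      split_ifs with h
      · have : (m : ℝ) ≤ t + r := by exact_mod_cast h
        have : 1 - u ≤ t / m := by rw [le_div_iff₀ hm0]; nlinarith
        linarith [Int.floor_add_fract y]
      · have : 0 ≤ (t : ℝ) / m := by positivity
        linarith [Int.floor_add_fract y, Int.fract_nonneg y]
    rw [← Int.self_sub_floor]
    push_cast at hfloor
    linarith [Int.floor_add_fract y]
  have hcard : #{t ∈ range m | m ≤ t + r} = r := by
    have : {t ∈ range m | m ≤ t + r} = Ico (m - r) m := by ext t; simp; omega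
    rw [this, Nat.card_Ico]
    omega
  calc ∑ t ∈ range m, Int.fract (y + t / m)
      ≤ ∑ t ∈ range m, (u + t / m - if m ≤ t + r then 1 else 0) := sum_le_sum hpt
    _ = m * u + (m - 1) / 2 - r := by
      rw [sum_sub_distrib, sum_add_distrib, sum_const, card_range, nsmul_eq_mul,
        sum_range_natCast_div hm, sum_boole, hcard]
    _ ≤ (m + 1) / 2 := by linarith

lemma exists_sum_fract_add_le {ι : Type*} (J : Finset ι) (x : ι → ℝ) (a : ℝ) {m : ℕ}
    (hm : m ≠ 0) : ∃ θ, 0 ≤ θ ∧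
      ∑ j ∈ J, Int.fract (x j + θ) + a * θ ≤ (#J + a) / 2 + (#J - a) / (2 * m) := by
  have hm0 : (0 : ℝ) < m := by positivity
  have hsum : ∑ t ∈ range m, (∑ j ∈ J, Int.fract (x j + t / m) + a * (t / m)) ≤
      ∑ t ∈ range m, ((#J + a) / 2 + (#J - a) / (2 * m)) := by
    have hJ : ∑ j ∈ J, ∑ t ∈ range m, Int.fract (x j + t / m) ≤ #J * ((m + 1) / 2) := by
      simpa using sum_le_sum fun j (_ : j ∈ J) => sum_fract_add_div_le (x j) hm
    rw [sum_add_distrib, sum_comm, ← mul_sum, sum_range_natCast_div hm, sum_const, card_range,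
      nsmul_eq_mul]
    have : (m : ℝ) * ((#J + a) / 2 + (#J - a) / (2 * m)) =
        #J * ((m + 1) / 2) + a * ((m - 1) / 2) := by
      field_simp
      ring
    linarith
  obtain ⟨t, -, ht⟩ := exists_le_of_sum_le (nonempty_range_iff.2 hm) hsum
  exact ⟨t / m, by positivity, ht⟩

theorem Submodule.exists_finset_sup_span_image_eq_top {K V ι : Type*} [DivisionRing K]
    [AddCommGroup V] [Module K V] [FiniteDimensional K V] (b : Basis ι K V) (k : ℕ) :
    ∀ W : Submodule K V, finrank K V ≤ finrank K W + k →
      ∃ J : Finset ι, #J ≤ k ∧ W ⊔ span K (b '' J) = ⊤ := by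
  classical
  induction k with
  | zero =>
    intro W hW
    exact ⟨∅, le_rfl, by simp [Submodule.eq_top_of_finrank_eq (le_antisymm W.finrank_le hW)]⟩
  | succ k ih =>
    intro W hW
    by_cases htop : W = ⊤
    · exact ⟨∅, by simp, by simp [htop]⟩
    obtain ⟨j, hj⟩ : ∃ j, b j ∉ W := by
      by_contra! h
      exact htop (eq_top_iff.2 (b.span_eq ▸ span_le.2 (Set.range_subset_iff.2 h)))
    have hlt : W < W ⊔ span K {b j} :=
      lt_of_le_of_ne le_sup_left fun h => hj (h ▸ mem_sup_right (mem_span_singleton_self _))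
    obtain ⟨J, hJ, hsup⟩ := ih (W ⊔ span K {b j}) (by linarith [finrank_lt_finrank_of_lt hlt])
    refine ⟨insert j J, (card_insert_le _ _).trans (by omega), ?_⟩
    rwa [coe_insert, Set.image_insert_eq, span_insert, ← sup_assoc]

theorem AffineSubspace.exists_mem_repr_support_subset {K V ι : Type*} [DivisionRing K]
    [AddCommGroup V] [Module K V] [FiniteDimensional K V] (b : Basis ι K V)
    {L : AffineSubspace K V} (hL : (L : Set V).Nonempty) {k : ℕ}
    (hk : finrank K V ≤ finrank K L.direction + k) :
    ∃ J : Finset ι, #J ≤ k ∧ ∃ x ∈ L, ↑(b.repr x).support ⊆ (J : Set ι) := by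
  obtain ⟨J, hJ, hsup⟩ := Submodule.exists_finset_sup_span_image_eq_top b k _ hk
  obtain ⟨x, hxL, hxJ⟩ := inter_nonempty_of_nonempty_of_sup_direction_eq_top
    (s₂ := (Submodule.span K (b '' J)).toAffineSubspace) hL ⟨0, Submodule.zero_mem _⟩
    (by rwa [Submodule.toAffineSubspace_direction])
  exact ⟨J, hJ, x, hxL, b.mem_span_image.1 hxJ⟩

-- `s` is the barycentric weight of the vertex `-𝟏`; the weight of `e_k` is `y k + s`.
lemma mem_Tsimplex_iff {n : ℕ} {y : EuclideanSpace ℝ (Fin n)} :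
    y ∈ Tsimplex n ↔ ∃ s : ℝ, 0 ≤ s ∧ (∀ k, 0 ≤ y k + s) ∧ ∑ k, y k + (n + 1) * s = 1 := by
  constructor
  · intro hy
    refine convexHull_min
      (t := {y | ∃ s : ℝ, 0 ≤ s ∧ (∀ k, 0 ≤ y k + s) ∧ ∑ k, y k + (n + 1) * s = 1}) ?_ ?_ hy
    · rintro _ (⟨j, rfl⟩ | rfl)
      · refine ⟨0, le_rfl, fun k => ?_, ?_⟩
        · simp only [PiLp.single_apply]; split_ifs <;> norm_num
        · simp [PiLp.single_apply]
      · exact ⟨1, zero_le_one, fun k => by simp, by simp⟩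
    · rintro x ⟨s, hs, hxs, hx⟩ x' ⟨s', hs', hxs', hx'⟩ a b ha hb hab
      refine ⟨a * s + b * s', by positivity, fun k => ?_, ?_⟩
      · have := add_nonneg (mul_nonneg ha (hxs k)) (mul_nonneg hb (hxs' k))
        simp only [WithLp.ofLp_add, WithLp.ofLp_smul, Pi.add_apply, Pi.smul_apply, smul_eq_mul]
        linarith
      · simp only [WithLp.ofLp_add, WithLp.ofLp_smul, Pi.add_apply, Pi.smul_apply, smul_eq_mul,
          sum_add_distrib, ← mul_sum]
        linear_combination a * hx + b * hx' + hab
  · rintro ⟨s, hs, hys, hy⟩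
    let vertex : Option (Fin n) → EuclideanSpace ℝ (Fin n) :=
      fun o => o.elim (WithLp.toLp 2 fun _ => -1) (EuclideanSpace.single · 1)
    let weight : Option (Fin n) → ℝ := fun o => o.elim s (y · + s)
    have hcomb : y = ∑ o, weight o • vertex o := by
      ext j
      simp [vertex, weight, Fintype.sum_option, Pi.single_apply]
    rw [hcomb]
    refine (convex_convexHull ℝ _).sum_mem (fun o _ => ?_) ?_
      (fun o _ => subset_convexHull ℝ _ ?_)
    · cases o <;> simp [weight, hs, hys]
    · simp only [weight, Fintype.sum_option, Option.elim, sum_add_distrib, sum_const, card_univ,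
        Fintype.card_fin, nsmul_eq_mul]
      linarith
    · cases o <;> simp [vertex]

noncomputable def idAddSum (n : ℕ) : (Fin n → ℝ) →ₗ[ℝ] (Fin n → ℝ) :=
  Matrix.toLin' (1 + Matrix.vecMulVec 1 1)

lemma idAddSum_apply {n : ℕ} (x : Fin n → ℝ) (k : Fin n) : idAddSum n x k = x k + ∑ i, x i := by
  simp only [idAddSum, Matrix.toLin'_apply, Matrix.add_mulVec, Matrix.one_mulVec,
    Matrix.vecMulVec_mulVec]
  simp [dotProduct]

lemma det_idAddSum (n : ℕ) : LinearMap.det (idAddSum n) = n + 1 := by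
  rw [idAddSum, LinearMap.det_toLin', Matrix.vecMulVec_eq Unit,
    Matrix.det_one_add_replicateCol_mul_replicateRow]
  simp [dotProduct, add_comm]

def cornerSimplex (n : ℕ) (c : ℝ) : Set (Fin n → ℝ) := {x | (∀ i, 0 ≤ x i) ∧ ∑ i, x i ≤ c}

lemma measurableSet_cornerSimplex (n : ℕ) (c : ℝ) : MeasurableSet (cornerSimplex n c) := by
  simp only [cornerSimplex, Set.ofPred_and, Set.ofPred_forall]
  exact (MeasurableSet.iInter fun i =>
    measurableSet_le measurable_const (measurable_pi_apply i)).inter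
      (measurableSet_le (by fun_prop) measurable_const)

lemma cornerSimplex_eq_empty {n : ℕ} {c : ℝ} (hc : c < 0) : cornerSimplex n c = ∅ :=
  Set.eq_empty_of_forall_notMem fun _ ⟨hx, hsum⟩ =>
    (hsum.trans_lt hc).not_ge (sum_nonneg fun i _ => hx i)

lemma cons_preimage_cornerSimplex (n : ℕ) (c t : ℝ) :
    (fun x => Fin.cons t x : (Fin n → ℝ) → Fin (n + 1) → ℝ) ⁻¹' cornerSimplex (n + 1) c =
      if 0 ≤ t then cornerSimplex n (c - t) else ∅ := by
  ext x
  split_ifs with ht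
  · simp [cornerSimplex, Fin.forall_fin_succ, Fin.sum_cons, ht, le_sub_iff_add_le']
  · simp [cornerSimplex, Fin.forall_fin_succ, ht]

lemma integral_sub_pow_div_factorial (n : ℕ) (c : ℝ) :
    ∫ t in (0 : ℝ)..c, (c - t) ^ n / n.factorial = c ^ (n + 1) / (n + 1).factorial := by
  rw [intervalIntegral.integral_div, intervalIntegral.integral_comp_sub_left (· ^ n), sub_self,
    sub_zero, integral_pow, Nat.factorial_succ]
  push_cast
  field_simp
  ring

lemma volume_cornerSimplex (n : ℕ) {c : ℝ} (hc : 0 ≤ c) :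
    volume (cornerSimplex n c) = ENNReal.ofReal (c ^ n / n.factorial) := by
  induction n generalizing c with
  | zero =>
    have : cornerSimplex 0 c = Set.univ := Set.eq_univ_of_forall fun x => ⟨finZeroElim, by simpa⟩
    simp [this, volume_pi]
  | succ n ih =>
    have hslice : ∀ t, volume (Prod.mk t ⁻¹'
          ((MeasurableEquiv.piFinSuccAbove (fun _ => ℝ) 0).symm ⁻¹' cornerSimplex (n + 1) c)) =
        (Set.Icc 0 c).indicator (fun t => ENNReal.ofReal ((c - t) ^ n / n.factorial)) t := by
      intro t
      have hcons : Prod.mk t ⁻¹' ((MeasurableEquiv.piFinSuccAbove (fun _ => ℝ) 0).symm ⁻¹'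
          cornerSimplex (n + 1) c) = (fun x => Fin.cons t x) ⁻¹' cornerSimplex (n + 1) c := by
        ext x
        simp [MeasurableEquiv.piFinSuccAbove_symm_apply, Fin.insertNthEquiv]
      rw [hcons, cons_preimage_cornerSimplex]
      by_cases ht : t ∈ Set.Icc 0 c
      · rw [if_pos ht.1, Set.indicator_of_mem ht, ih (sub_nonneg.2 ht.2)]
      · rw [Set.indicator_of_notMem ht]
        split_ifs with ht0
        · rw [cornerSimplex_eq_empty (by grind), measure_empty]
        · exact measure_empty
    rw [← ((volume_preserving_piFinSuccAbove (fun _ => ℝ) 0).symm _).measure_preimage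
      (measurableSet_cornerSimplex _ _).nullMeasurableSet, Measure.volume_eq_prod,
      Measure.prod_apply
        ((measurableSet_cornerSimplex _ _).preimage (MeasurableEquiv.measurable _)),
      lintegral_congr hslice, lintegral_indicator measurableSet_Icc,
      ← ofReal_integral_eq_lintegral_ofReal, integral_Icc_eq_integral_Ioc,
      ← intervalIntegral.integral_of_le hc, integral_sub_pow_div_factorial]
    · exact (by fun_prop : Continuous fun t : ℝ => (c - t) ^ n / n.factorial).integrableOn_Icc
    · filter_upwards [ae_restrict_mem measurableSet_Icc] with t ht
      have : 0 ≤ c - t := sub_nonneg.2 ht.2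
      positivity

lemma Tsimplex_eq_preimage_image (n : ℕ) :
    Tsimplex n = WithLp.ofLp ⁻¹' ((fun x => idAddSum n x - 1) '' cornerSimplex n 1) := by
  ext y
  simp only [mem_Tsimplex_iff, Set.mem_preimage, Set.mem_image, cornerSimplex, Set.mem_ofPred_eq]
  constructor
  · rintro ⟨s, hs, hys, hy⟩
    have hsum : ∑ i, (y i + s) = 1 - s := by
      simp only [sum_add_distrib, sum_const, card_univ, Fintype.card_fin, nsmul_eq_mul]
      linarith
    refine ⟨fun k => y k + s, ⟨hys, by linarith⟩, funext fun k => ?_⟩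
    simp only [Pi.sub_apply, idAddSum_apply, hsum, Pi.one_apply]
    ring
  · rintro ⟨x, ⟨hx, hx1⟩, hxy⟩
    simp only [← hxy]
    refine ⟨1 - ∑ i, x i, by linarith, fun k => ?_, ?_⟩
    · simpa [idAddSum_apply] using hx k
    · simp only [Pi.sub_apply, idAddSum_apply, Pi.one_apply, sum_sub_distrib, sum_add_distrib,
        sum_const, card_univ, Fintype.card_fin, nsmul_eq_mul]
      ring

lemma volume_Tsimplex (n : ℕ) : volume (Tsimplex n) = ENNReal.ofReal ((n + 1) / n.factorial) := by
  rw [Tsimplex_eq_preimage_image]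
  refine ((EuclideanSpace.volume_preserving_symm_measurableEquiv_toLp _).measure_preimage_equiv
    _).trans ?_
  simp only [sub_eq_add_neg]
  rw [← Set.image_image (· + -1) (idAddSum n)]
  simp only [Set.image_add_right, measure_preimage_add_right, Measure.addHaar_image_linearMap,
    det_idAddSum, volume_cornerSimplex n zero_le_one, one_pow]
  rw [abs_of_nonneg (by positivity), ← ENNReal.ofReal_mul (by positivity), mul_one_div]

lemma mem_smul_Tsimplex_of_le {n : ℕ} {μ θ : ℝ} (hμ : 0 < μ) (hθ : 0 ≤ θ)
    {y : EuclideanSpace ℝ (Fin n)} (hy : ∀ k, -θ ≤ y k) (hsum : ∑ k, y k + (n + 1) * θ ≤ μ) :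
    y ∈ μ • Tsimplex n := by
  set σ := (μ - ∑ k, y k) / (n + 1)
  have hσ : θ ≤ σ := by rw [le_div_iff₀ (by positivity)]; linarith
  rw [Set.mem_smul_set_iff_inv_smul_mem₀ hμ.ne', mem_Tsimplex_iff]
  refine ⟨μ⁻¹ * σ, mul_nonneg (by positivity) (hθ.trans hσ), fun k => ?_, ?_⟩
  · have : 0 ≤ μ⁻¹ * (y k + σ) := mul_nonneg (by positivity) (by linarith [hy k])
    simpa [mul_add] using this
  · simp only [WithLp.ofLp_smul, Pi.smul_apply, smul_eq_mul, ← mul_sum, σ]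
    field_simp
    ring

lemma mem_smul_Tsimplex_add_intLattice {n : ℕ} {μ θ : ℝ} (hμ : 0 < μ) (hθ : 0 ≤ θ)
    {J : Finset (Fin n)} {x : EuclideanSpace ℝ (Fin n)} (hx : ∀ k ∉ J, x k = 0)
    (h : ∑ j ∈ J, Int.fract (x j + θ) + (n + 1 - #J) * θ ≤ μ) :
    x ∈ μ • Tsimplex n + intLattice n := by
  classical
  let y : EuclideanSpace ℝ (Fin n) :=
    WithLp.toLp 2 fun k => if k ∈ J then Int.fract (x k + θ) - θ else 0
  let z : EuclideanSpace ℝ (Fin n) :=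
    WithLp.toLp 2 fun k => if k ∈ J then (⌊x k + θ⌋ : ℝ) else 0
  have hxyz : x = y + z := by
    ext k
    by_cases hk : k ∈ J
    · simp only [y, z, hk, if_true, WithLp.ofLp_add, Pi.add_apply]
      linarith [Int.fract_add_floor (x k + θ)]
    · simp [y, z, hk, hx k hk]
  rw [hxyz]
  refine Set.add_mem_add (mem_smul_Tsimplex_of_le hμ hθ (fun k => ?_) ?_) fun k => ?_
  · by_cases hk : k ∈ J
    · simp [y, hk, Int.fract_nonneg]
    · simp [y, hk, hθ]
  · simp only [y, sum_ite_mem, univ_inter, sum_sub_distrib, sum_const, nsmul_eq_mul]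
    linarith
  · by_cases hk : k ∈ J
    · exact ⟨⌊x k + θ⌋, by simp [z, hk]⟩
    · exact ⟨0, by simp [z, hk]⟩

lemma covMin_nonneg (n i : ℕ) (K : Set (EuclideanSpace ℝ (Fin n))) : 0 ≤ covMin n i K :=
  Real.sInf_nonneg fun _ h => h.1.le

lemma covMin_Tsimplex_le {n i : ℕ} (hi : 0 < i) {m : ℕ} (hm : m ≠ 0) :
    covMin n i (Tsimplex n) ≤ (n + 1) / 2 + (i - (n + 1) / 2) / m := by
  have hμ : 0 < ((n : ℝ) + 1) / 2 + (i - (n + 1) / 2) / m := by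
    have h1 : (1 : ℝ) ≤ m := by exact_mod_cast Nat.one_le_iff_ne_zero.2 hm
    have h2 : (1 : ℝ) ≤ i := by exact_mod_cast hi
    have : ((n : ℝ) + 1) / 2 + (i - (n + 1) / 2) / m = ((n + 1) * (m - 1) / 2 + i) / m := by
      field_simp
      ring
    rw [this]
    positivity
  refine csInf_le ⟨0, fun _ h => h.1.le⟩ ⟨hμ, fun L hL hdim => ?_⟩
  obtain ⟨J, hJ, x, hxL, hx⟩ := L.exists_mem_repr_support_subset
    (EuclideanSpace.basisFun (Fin n) ℝ).toBasis hL (k := i)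
    (by rw [hdim, finrank_euclideanSpace_fin]; omega)
  obtain ⟨θ, hθ, hθJ⟩ := exists_sum_fract_add_le J x (n + 1 - #J) hm
  refine ⟨x, mem_smul_Tsimplex_add_intLattice hμ hθ (fun k hk => ?_) (hθJ.trans ?_), hxL⟩
  · simpa using Finsupp.support_subset_iff.1 hx k hk
  · have hJi : (#J : ℝ) ≤ i := by exact_mod_cast hJ
    have : ((#J : ℝ) - (n + 1 - #J)) / (2 * m) = (#J - (n + 1) / 2) / m := by
      field_simp
      ring
    rw [add_sub_cancel, this]
    gcongr

lemma covMin_Tsimplex_le_min {n i : ℕ} (hi : 0 < i) :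
    covMin n i (Tsimplex n) ≤ min (i : ℝ) ((n + 1) / 2) := by
  refine le_min (by simpa using covMin_Tsimplex_le (n := n) hi one_ne_zero) ?_
  have hlim : Filter.Tendsto (fun m : ℕ => ((n : ℝ) + 1) / 2 + (i - (n + 1) / 2) / m)
      Filter.atTop (nhds ((n + 1) / 2)) := by
    simpa using tendsto_const_nhds.add
      (tendsto_const_div_atTop_nhds_zero_nat ((i : ℝ) - (n + 1) / 2))
  exact ge_of_tendsto hlim ((Filter.eventually_ne_atTop 0).mono fun m hm =>
    covMin_Tsimplex_le hi hm)

lemma sixteen_fifteenths_pow_le {n : ℕ} (hn : 6 ≤ n) :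
    (16 / 15 : ℝ) ^ (4 * n) ≤ (3 / 2) ^ (n - 2) := by
  induction n, hn using Nat.le_induction with
  | base => norm_num
  | succ n hn ih =>
    rw [show 4 * (n + 1) = 4 * n + 4 by ring, show n + 1 - 2 = n - 2 + 1 by omega, pow_add,
      pow_succ (3 / 2 : ℝ)]
    exact mul_le_mul ih (by norm_num) (by norm_num) (by positivity)

lemma prod_min_mul_pow_le_factorial {n : ℕ} (hn : 6 ≤ n) :
    (∏ i ∈ Icc 1 n, min (i : ℝ) ((n + 1) / 2)) * (16 / 15) ^ n ≤ n.factorial := by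
  set t := #{i ∈ Icc 1 n | 3 * (n + 1) ≤ 4 * i}
  have hprod : ∏ i ∈ Icc 1 n, min (i : ℝ) ((n + 1) / 2) ≤ (2 / 3) ^ t * n.factorial :=
    calc ∏ i ∈ Icc 1 n, min (i : ℝ) ((n + 1) / 2)
        ≤ ∏ i ∈ Icc 1 n, (if 3 * (n + 1) ≤ 4 * i then 2 / 3 else 1) * (i : ℝ) := by
          refine prod_le_prod (fun i _ => le_min (by positivity) (by positivity)) fun i _ => ?_
          split_ifs with h
          · have : (3 : ℝ) * (n + 1) ≤ 4 * i := by exact_mod_cast h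
            exact (min_le_right _ _).trans (by linarith)
          · simp
      _ = (2 / 3) ^ t * n.factorial := by
          rw [prod_mul_distrib, prod_ite, prod_const, prod_const_one, mul_one, ← Nat.cast_prod,
            ← prod_Ico_id_eq_factorial, Ico_add_one_right_eq_Icc]
  have ht : n ≤ 4 * t + 2 := by
    have : {i ∈ Icc 1 n | 3 * (n + 1) ≤ 4 * i} = Icc ((3 * n + 6) / 4) n := by
      ext i; simp only [mem_filter, mem_Icc]; omega
    rw [show t = n + 1 - (3 * n + 6) / 4 by rw [← Nat.card_Icc, ← this]]
    omega
  have hpow : (16 / 15 : ℝ) ^ n ≤ (3 / 2) ^ t := by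
    refine (pow_le_pow_iff_left₀ (by positivity) (by positivity) four_ne_zero).1 ?_
    rw [← pow_mul, ← pow_mul, mul_comm n]
    exact (sixteen_fifteenths_pow_le hn).trans (pow_le_pow_right₀ (by norm_num) (by omega))
  calc (∏ i ∈ Icc 1 n, min (i : ℝ) ((n + 1) / 2)) * (16 / 15) ^ n
      ≤ (2 / 3) ^ t * n.factorial * (3 / 2) ^ t := by gcongr
    _ = n.factorial := by rw [mul_right_comm, ← mul_pow]; norm_num

/-- For `n ≥ 6`, the covering product of the simplex `T_n = conv{e_1, …, e_n, -𝟏}` satisfies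
`μ_1(T_n)·…·μ_n(T_n)·vol(T_n) ≤ (n+1)/(16/15)^{7n/15}`. -/
theorem covering_product_Tsimplex_le (n : ℕ) (hn : 6 ≤ n) :
    (∏ i ∈ Finset.Icc 1 n, covMin n i (Tsimplex n)) * (volume (Tsimplex n)).toReal ≤
      ((n : ℝ) + 1) / (16 / 15 : ℝ) ^ (7 * (n : ℝ) / 15) := by
  have hcov : ∏ i ∈ Icc 1 n, covMin n i (Tsimplex n) ≤
      ∏ i ∈ Icc 1 n, min (i : ℝ) ((n + 1) / 2) :=
    prod_le_prod (fun i _ => covMin_nonneg n i _) fun i hi =>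
      covMin_Tsimplex_le_min (mem_Icc.1 hi).1
  have hexp : (16 / 15 : ℝ) ^ (7 * (n : ℝ) / 15) ≤ (16 / 15) ^ n := by
    rw [← Real.rpow_natCast]
    have : (0 : ℝ) ≤ n := n.cast_nonneg
    exact Real.rpow_le_rpow_of_exponent_le (by norm_num) (by linarith)
  rw [volume_Tsimplex, ENNReal.toReal_ofReal (by positivity), le_div_iff₀ (by positivity)]
  calc (∏ i ∈ Icc 1 n, covMin n i (Tsimplex n)) * ((n + 1) / n.factorial) *
        (16 / 15 : ℝ) ^ (7 * (n : ℝ) / 15)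
      ≤ (∏ i ∈ Icc 1 n, min (i : ℝ) ((n + 1) / 2)) * ((n + 1) / n.factorial) *
          (16 / 15) ^ n := by
        gcongr
    _ = (n + 1) *
          ((∏ i ∈ Icc 1 n, min (i : ℝ) ((n + 1) / 2)) * (16 / 15) ^ n / n.factorial) := by
        ring
    _ ≤ n + 1 :=
        mul_le_of_le_one_right (by positivity)
          ((div_le_one (by positivity)).2 (prod_min_mul_pow_le_factorial hn))
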